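/- For the maximal decomposition A = A_1 ⊞_s A_2 (g + h = j blocks of sizes g and h), if z and z' solve A_1 zᵀ = 1ᵀ and A_2 z'ᵀ = 1ᵀ with all coordinates positive, and z_i + s Σ_{l≠i} z_l ≤ 1 for each i (and similarly for z'), then Σ_{i=1}^g z_i ≤ g/(1 + (g-1)s) and Σ_{i=1}^h z'_i ≤ h/(1 + (h-1)s), and consequently, for 0 ≤ s ≤ 1 - η, 1 - s² (Σ z_i)(Σ z'_i) ≥ c for a constant c > 0 depending only on η, g, h. -/
import Mathlib


lemma sum_le_aux (n : ℕ) (s : ℝ) (z : Fin n → ℝ)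
    (hden : 0 < 1 + ((n : ℝ) - 1) * s)
    (hz : ∀ i, z i + s * ∑ l ∈ Finset.univ.erase i, z l ≤ 1) :
    ∑ i, z i ≤ (n : ℝ) / (1 + ((n : ℝ) - 1) * s) := by
  rw [le_div_iff₀ hden]
  have h1 : ∀ i : Fin n, ∑ l ∈ Finset.univ.erase i, z l = (∑ l, z l) - z i :=
    fun i => Finset.sum_erase_eq_sub (Finset.mem_univ i)
  have h2 : ∑ i, (z i + s * ((∑ l, z l) - z i)) ≤ (n : ℝ) := by
    have := Finset.sum_le_sum (fun i (_ : i ∈ Finset.univ) => hz i)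
    simpa [h1, Finset.card_univ] using this
  have h3 : ∑ i, (z i + s * ((∑ l, z l) - z i))
      = (∑ i, z i) + s * ((n : ℝ) * (∑ l, z l) - ∑ i, z i) := by
    rw [Finset.sum_add_distrib, ← Finset.mul_sum, Finset.sum_sub_distrib,
      Finset.sum_const, Finset.card_univ]
    simp
  rw [h3] at h2
  nlinarith [h2]

lemma den_pos_aux {η : ℝ} (hη : 0 < η) (n : ℕ) {s : ℝ} (hs0 : 0 ≤ s)
    (hs1 : s ≤ 1 - η) : 0 < 1 + ((n : ℝ) - 1) * s := by
  rcases Nat.eq_zero_or_pos n with rfl | hn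
  · simp only [Nat.cast_zero]; nlinarith
  · have : (1 : ℝ) ≤ (n : ℝ) := by exact_mod_cast hn
    nlinarith

/-- key bound: if n ≥ 1, s * (Σ z) ≤ 1 - η'/n where η' = min η 1 -/
lemma sS_bound {η : ℝ} (hη : 0 < η) {n : ℕ} (hn : 1 ≤ n) {s : ℝ} (hs0 : 0 ≤ s)
    (hs1 : s ≤ 1 - η) (z : Fin n → ℝ)
    (hz : ∀ i, z i + s * ∑ l ∈ Finset.univ.erase i, z l ≤ 1) :
    s * (∑ i, z i) ≤ 1 - min η 1 / n := by
  set η' := min η 1 with hη'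
  have hη'pos : 0 < η' := lt_min hη one_pos
  have hη'le : η' ≤ 1 := min_le_right _ _
  have hs1' : s ≤ 1 - η' := le_trans hs1 (by have := min_le_left η 1; linarith)
  have hn1 : (1 : ℝ) ≤ (n : ℝ) := by exact_mod_cast hn
  have hden : 0 < 1 + ((n : ℝ) - 1) * s := by nlinarith
  have hS := sum_le_aux n s z hden hz
  have hnpos : (0 : ℝ) < n := by linarith
  calc s * (∑ i, z i) ≤ s * ((n : ℝ) / (1 + ((n : ℝ) - 1) * s)) := by
        exact mul_le_mul_of_nonneg_left hS hs0
    _ ≤ 1 - η' / n := by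
        rw [← mul_div_assoc, div_le_iff₀ hden]
        have hA : 0 ≤ η' * ((n : ℝ) - 1) * (1 - s) :=
          mul_nonneg (mul_nonneg hη'pos.le (by linarith)) (by linarith)
        have hB : (n : ℝ) * η' ≤ (n : ℝ) * (1 - s) :=
          mul_le_mul_of_nonneg_left (by linarith) (by linarith)
        have hgoal : s * (n : ℝ) * (n : ℝ) ≤ ((n : ℝ) - η') * (1 + ((n : ℝ) - 1) * s) := by
          nlinarith [hA, hB]
        have e : 1 - η' / (n : ℝ) = ((n : ℝ) - η') / n := by field_simp
        rw [e, div_mul_eq_mul_div, le_div_iff₀ hnpos]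
        nlinarith [hgoal]


/-- if `z`, `z'` have positive entries and satisfy
`zᵢ + s Σ_{l≠i} z_l ≤ 1` (resp. for `z'`), then `Σ zᵢ ≤ g/(1+(g-1)s)` and
`Σ z'ᵢ ≤ h/(1+(h-1)s)`, and for `0 ≤ s ≤ 1-η` there is a constant `c > 0`
depending only on `η, g, h` with `1 - s²(Σ zᵢ)(Σ z'ᵢ) ≥ c`. -/
theorem sum_bounds_and_denominator {η : ℝ} (hη : 0 < η) (g h : ℕ) :
    (∀ (s : ℝ) (z : Fin g → ℝ) (z' : Fin h → ℝ),
      0 ≤ s → s ≤ 1 - η →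
      (∀ i, 0 < z i) → (∀ i, 0 < z' i) →
      (∀ i, z i + s * ∑ l ∈ Finset.univ.erase i, z l ≤ 1) →
      (∀ i, z' i + s * ∑ l ∈ Finset.univ.erase i, z' l ≤ 1) →
      (∑ i, z i ≤ (g : ℝ) / (1 + ((g : ℝ) - 1) * s) ∧
       ∑ i, z' i ≤ (h : ℝ) / (1 + ((h : ℝ) - 1) * s))) ∧
    (∃ c > 0, ∀ (s : ℝ) (z : Fin g → ℝ) (z' : Fin h → ℝ),
      0 ≤ s → s ≤ 1 - η →
      (∀ i, 0 < z i) → (∀ i, 0 < z' i) →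
      (∀ i, z i + s * ∑ l ∈ Finset.univ.erase i, z l ≤ 1) →
      (∀ i, z' i + s * ∑ l ∈ Finset.univ.erase i, z' l ≤ 1) →
      c ≤ 1 - s ^ 2 * (∑ i, z i) * (∑ i, z' i)) := by
  constructor
  · intro s z z' hs0 hs1 _ _ hz hz'
    exact ⟨sum_le_aux g s z (den_pos_aux hη g hs0 hs1) hz,
      sum_le_aux h s z' (den_pos_aux hη h hs0 hs1) hz'⟩
  · set η' := min η 1 with hη'
    have hη'pos : 0 < η' := lt_min hη one_pos
    have hη'le : η' ≤ 1 := min_le_right _ _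
    refine ⟨η' / (g + h + 1), by positivity, ?_⟩
    intro s z z' hs0 hs1 hzpos hz'pos hz hz'
    have hgh1 : (1 : ℝ) ≤ (g : ℝ) + h + 1 := by
      have h1 : (0:ℝ) ≤ g := Nat.cast_nonneg g
      have h2 : (0:ℝ) ≤ h := Nat.cast_nonneg h
      linarith
    have hc1 : η' / ((g : ℝ) + h + 1) ≤ 1 := by
      rw [div_le_one (by positivity)]; linarith
    rcases Nat.eq_zero_or_pos g with rfl | hg
    · simp only [Finset.univ_eq_empty, Finset.sum_empty, mul_zero, zero_mul,
        sub_zero]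
      simpa using hc1
    rcases Nat.eq_zero_or_pos h with rfl | hh
    · simp only [Finset.univ_eq_empty, Finset.sum_empty, mul_zero, sub_zero]
      simpa using hc1
    have hS0 : 0 ≤ ∑ i, z i := Finset.sum_nonneg fun i _ => (hzpos i).le
    have hT0 : 0 ≤ ∑ i, z' i := Finset.sum_nonneg fun i _ => (hz'pos i).le
    have h1 := sS_bound hη hg hs0 hs1 z hz
    have h2 := sS_bound hη hh hs0 hs1 z' hz'
    rw [← hη'] at h1 h2
    have hg1 : (1 : ℝ) ≤ (g : ℝ) := by exact_mod_cast hg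
    have hh1 : (1 : ℝ) ≤ (h : ℝ) := by exact_mod_cast hh
    have hng : η' / g ≤ 1 := by rw [div_le_one (by linarith)]; linarith
    have hnh : η' / h ≤ 1 := by rw [div_le_one (by linarith)]; linarith
    have hcg : η' / ((g : ℝ) + h + 1) ≤ η' / g :=
      div_le_div_of_nonneg_left hη'pos.le (by linarith) (by linarith)
    have key : s ^ 2 * (∑ i, z i) * (∑ i, z' i)
        = (s * ∑ i, z i) * (s * ∑ i, z' i) := by ring
    have hsS0 : 0 ≤ s * ∑ i, z i := mul_nonneg hs0 hS0
    have hsT0 : 0 ≤ s * ∑ i, z' i := mul_nonneg hs0 hT0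
    have : (s * ∑ i, z i) * (s * ∑ i, z' i) ≤ 1 - η' / g := by
      calc (s * ∑ i, z i) * (s * ∑ i, z' i) ≤ (1 - η' / g) * 1 := by
            have hdg : 0 ≤ η' / (g:ℝ) := by positivity
            have hdh : 0 ≤ η' / (h:ℝ) := by positivity
            apply mul_le_mul h1 (by linarith) hsT0 (by linarith)
        _ = 1 - η' / g := by ring
    rw [key]
    linarith
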